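/- For every b ∈ (0,1) there exists x* = x*(b) > 0 such that for every x > x*: φ_1(bx) − (1/b)·φ_{1,b}(x) > 0, b·φ_{1,b}(x) − φ_1(x) < 0, and Ψ_b(x) > 0. -/

import Mathlib

/-!
On `[0, π/3]` the integrand of `φ_1(x)` is at least `e^{−xη}/2`, on `[π/3, 5π/3]` it is at most
`e^{−x}` in absolute value, and on `[5π/3, 2π]` it is nonnegative. Hence
`x·φ_1(x) ≥ (1 − e^{−πx/3})/2 − (4π/3)·x·e^{−x} → 1/2`, so `φ_1` decays no faster than `1/(4x)`.
In contrast `√(1+b²−2b cos η) ≥ 1 − b`, so `|φ_{1,b}(x)| ≤ 2π·e^{−(1−b)x}` decays exponentially.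
The first two claims follow, and `Ψ_b(x)` is the first expression minus the second.
-/

open MeasureTheory Real Filter Topology

noncomputable section

namespace DCV16

/-- `φ_1(x) = ∫_0^{2π} e^{−2x·sin(η/2)} cos η dη`. -/
def phi1 (x : ℝ) : ℝ :=
  ∫ η in (0:ℝ)..(2*π), Real.exp (-2*x*Real.sin (η/2)) * Real.cos η

/-- `φ_{1,b}(x) = ∫_0^{2π} e^{−x·√(1+b²−2b·cos η)} cos η dη`. -/
def phi1b (b x : ℝ) : ℝ :=
  ∫ η in (0:ℝ)..(2*π), Real.exp (-x * Real.sqrt (1 + b^2 - 2*b*Real.cos η)) * Real.cos η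

/-- `Ψ_b(x) = φ_1(x) + φ_1(bx) − (b+1/b)·φ_{1,b}(x)`. -/
def Psi (b x : ℝ) : ℝ := phi1 x + phi1 (b*x) - (b + 1/b) * phi1b b x

lemma integral_exp_neg_mul {x : ℝ} (hx : x ≠ 0) (L : ℝ) :
    ∫ η in (0:ℝ)..L, exp (-x * η) = (1 - exp (-x * L)) / x := by
  rw [intervalIntegral.integral_comp_mul_left (fun η => exp η) (neg_ne_zero.2 hx), integral_exp]
  simp only [mul_zero, exp_zero, smul_eq_mul]
  field_simp
  ring

lemma tendsto_mul_exp_neg_mul {c : ℝ} (hc : 0 < c) :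
    Tendsto (fun x : ℝ => x * exp (-c * x)) atTop (𝓝 0) := by
  simpa only [rpow_one] using tendsto_rpow_mul_exp_neg_mul_atTop_nhds_zero 1 c hc

def phi1Integrand (x η : ℝ) : ℝ := exp (-2 * x * sin (η / 2)) * cos η

lemma phi1_eq_integral (x : ℝ) : phi1 x = ∫ η in (0:ℝ)..(2*π), phi1Integrand x η := rfl

lemma continuous_phi1Integrand (x : ℝ) : Continuous (phi1Integrand x) := by
  unfold phi1Integrand; fun_prop

lemma half_le_sin_half {η : ℝ} (h₁ : π / 3 ≤ η) (h₂ : η ≤ 5 * π / 3) : 1 / 2 ≤ sin (η / 2) := by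
  rw [← cos_pi_div_two_sub, ← cos_abs, ← cos_pi_div_three]
  exact cos_le_cos_of_nonneg_of_le_pi (abs_nonneg _) (by linarith [pi_pos])
    (abs_le.2 ⟨by linarith, by linarith⟩)

lemma exp_neg_mul_div_two_le_phi1Integrand {x η : ℝ} (hx : 0 ≤ x) (h₀ : 0 ≤ η)
    (h₁ : η ≤ π / 3) : exp (-x * η) / 2 ≤ phi1Integrand x η := by
  have hcos : 1 / 2 ≤ cos η := by
    rw [← cos_pi_div_three]
    exact cos_le_cos_of_nonneg_of_le_pi h₀ (by linarith [pi_pos]) h₁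
  have hexp : exp (-x * η) ≤ exp (-2 * x * sin (η / 2)) := by
    have := sin_le (by linarith : 0 ≤ η / 2)
    exact exp_le_exp.2 (by nlinarith)
  rw [phi1Integrand, div_eq_mul_one_div]
  exact mul_le_mul hexp hcos (by norm_num) (exp_pos _).le

lemma abs_phi1Integrand_le {x η : ℝ} (hx : 0 ≤ x) (h₁ : π / 3 ≤ η) (h₂ : η ≤ 5 * π / 3) :
    |phi1Integrand x η| ≤ exp (-x) := by
  have hexp : exp (-2 * x * sin (η / 2)) ≤ exp (-x) :=
    exp_le_exp.2 (by nlinarith [half_le_sin_half h₁ h₂])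
  rw [phi1Integrand, abs_mul, abs_exp]
  exact (mul_le_of_le_one_right (exp_pos _).le (abs_cos_le_one η)).trans hexp

lemma phi1Integrand_nonneg (x : ℝ) {η : ℝ} (h₁ : 3 * π / 2 ≤ η) (h₂ : η ≤ 2 * π) :
    0 ≤ phi1Integrand x η := by
  have : 0 ≤ cos η := by
    rw [← cos_sub_two_pi]
    exact cos_nonneg_of_mem_Icc ⟨by linarith, by linarith [pi_pos]⟩
  unfold phi1Integrand
  positivity

lemma one_sub_exp_div_le_integral_phi1Integrand {x : ℝ} (hx : 0 < x) :
    (1 - exp (-x * (π / 3))) / (2 * x) ≤ ∫ η in (0:ℝ)..(π / 3), phi1Integrand x η := by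
  have hmono := intervalIntegral.integral_mono_on (by positivity)
    ((by fun_prop : Continuous fun η => exp (-x * η) / 2).intervalIntegrable (μ := volume) _ _)
    ((continuous_phi1Integrand x).intervalIntegrable _ _)
    fun η hη => exp_neg_mul_div_two_le_phi1Integrand hx.le hη.1 hη.2
  rwa [intervalIntegral.integral_div, integral_exp_neg_mul hx.ne', div_div, mul_comm x] at hmono

lemma neg_le_integral_phi1Integrand {x : ℝ} (hx : 0 ≤ x) :
    -(4 * π / 3 * exp (-x)) ≤ ∫ η in (π / 3)..(5 * π / 3), phi1Integrand x η := by
  have hbound : ∀ η ∈ Set.uIoc (π / 3) (5 * π / 3), ‖phi1Integrand x η‖ ≤ exp (-x) := by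
    intro η hη
    rw [Set.uIoc_of_le (by linarith [pi_pos])] at hη
    exact abs_phi1Integrand_le hx hη.1.le hη.2
  have := intervalIntegral.norm_integral_le_of_norm_le_const hbound
  rw [Real.norm_eq_abs, abs_of_nonneg (by linarith [pi_pos] : (0:ℝ) ≤ 5 * π / 3 - π / 3)] at this
  linarith [neg_abs_le (∫ η in (π / 3)..(5 * π / 3), phi1Integrand x η)]

lemma integral_phi1Integrand_nonneg (x : ℝ) :
    0 ≤ ∫ η in (5 * π / 3)..(2 * π), phi1Integrand x η :=
  intervalIntegral.integral_nonneg (by linarith [pi_pos])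
    fun η hη => phi1Integrand_nonneg x (by linarith [hη.1, pi_pos]) hη.2

lemma le_mul_phi1 {x : ℝ} (hx : 0 < x) :
    (1 - exp (-x * (π / 3))) / 2 - 4 * π / 3 * (x * exp (-x)) ≤ x * phi1 x := by
  have hint : ∀ a c : ℝ, IntervalIntegrable (phi1Integrand x) volume a c :=
    fun a c => (continuous_phi1Integrand x).intervalIntegrable a c
  have hsplit : phi1 x = (∫ η in (0:ℝ)..(π / 3), phi1Integrand x η)
      + (∫ η in (π / 3)..(5 * π / 3), phi1Integrand x η)
      + ∫ η in (5 * π / 3)..(2 * π), phi1Integrand x η := by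
    rw [phi1_eq_integral, intervalIntegral.integral_add_adjacent_intervals (hint _ _) (hint _ _),
      intervalIntegral.integral_add_adjacent_intervals (hint _ _) (hint _ _)]
  have h₁ := one_sub_exp_div_le_integral_phi1Integrand hx
  rw [div_le_iff₀ (by positivity)] at h₁
  have h₂ := mul_le_mul_of_nonneg_left (neg_le_integral_phi1Integrand hx.le) hx.le
  have h₃ := mul_nonneg hx.le (integral_phi1Integrand_nonneg x)
  rw [hsplit]
  linarith

lemma eventually_quarter_lt_mul_phi1 : ∀ᶠ x in atTop, 1 / 4 < x * phi1 x := by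
  have hlim : Tendsto (fun x => (1 - exp (-x * (π / 3))) / 2 - 4 * π / 3 * (x * exp (-x)))
      atTop (𝓝 ((1 - 0) / 2 - 4 * π / 3 * 0)) := by
    have hexp : Tendsto (fun x => exp (-x * (π / 3))) atTop (𝓝 0) :=
      tendsto_exp_atBot.comp (tendsto_neg_atTop_atBot.atBot_mul_const (by positivity))
    have hmul := tendsto_mul_exp_neg_mul one_pos
    simp only [neg_mul, one_mul] at hmul
    exact ((tendsto_const_nhds.sub hexp).div_const 2).sub (hmul.const_mul _)
  simp only [sub_zero, mul_zero] at hlim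
  filter_upwards [hlim.eventually (lt_mem_nhds (by norm_num : (1:ℝ) / 4 < 1 / 2)),
    eventually_gt_atTop 0] with x hlt hx
  exact hlt.trans_le (le_mul_phi1 hx)

lemma abs_one_sub_le_sqrt {b : ℝ} (hb : 0 ≤ b) (η : ℝ) :
    |1 - b| ≤ √(1 + b ^ 2 - 2 * b * cos η) :=
  abs_le_sqrt (by nlinarith [cos_le_one η])

lemma abs_phi1b_le {b x : ℝ} (hb : 0 ≤ b) (hx : 0 ≤ x) :
    |phi1b b x| ≤ 2 * π * exp (-|1 - b| * x) := by
  have hbound : ∀ η ∈ Set.uIoc 0 (2 * π),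
      ‖exp (-x * √(1 + b ^ 2 - 2 * b * cos η)) * cos η‖ ≤ exp (-|1 - b| * x) := by
    intro η _
    have hexp : exp (-x * √(1 + b ^ 2 - 2 * b * cos η)) ≤ exp (-|1 - b| * x) :=
      exp_le_exp.2 (by nlinarith [abs_one_sub_le_sqrt hb η])
    rw [Real.norm_eq_abs, abs_mul, abs_exp]
    exact (mul_le_of_le_one_right (exp_pos _).le (abs_cos_le_one η)).trans hexp
  have := intervalIntegral.norm_integral_le_of_norm_le_const hbound
  rw [Real.norm_eq_abs, sub_zero, abs_of_pos two_pi_pos] at this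
  exact this.trans_eq (mul_comm _ _)

lemma tendsto_mul_phi1b {b : ℝ} (hb : 0 ≤ b) (hb1 : b ≠ 1) :
    Tendsto (fun x => x * phi1b b x) atTop (𝓝 0) := by
  have hdecay : Tendsto (fun x => 2 * π * (x * exp (-|1 - b| * x))) atTop (𝓝 0) := by
    simpa only [mul_zero] using
      (tendsto_mul_exp_neg_mul (abs_pos.2 (sub_ne_zero.2 hb1.symm))).const_mul (2 * π)
  refine squeeze_zero_norm' ?_ hdecay
  filter_upwards [eventually_ge_atTop 0] with x hx
  rw [Real.norm_eq_abs, abs_mul, abs_of_nonneg hx, mul_left_comm]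
  exact mul_le_mul_of_nonneg_left (abs_phi1b_le hb hx) hx

lemma Psi_eq_sub (b x : ℝ) :
    Psi b x = (phi1 (b * x) - 1 / b * phi1b b x) - (b * phi1b b x - phi1 x) := by
  rw [Psi]; ring

/-- For every `b ∈ (0,1)` there is `x* = x*(b) > 0` such that for every `x > x*`:
`φ_1(bx) − (1/b)·φ_{1,b}(x) > 0`, `b·φ_{1,b}(x) − φ_1(x) < 0` and `Ψ_b(x) > 0`. -/
theorem positivity_at_infinity (b : ℝ) (hb : b ∈ Set.Ioo (0:ℝ) 1) :
    ∃ xs : ℝ, 0 < xs ∧ ∀ x : ℝ, xs < x →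
      0 < phi1 (b*x) - (1/b) * phi1b b x ∧
      b * phi1b b x - phi1 x < 0 ∧
      0 < Psi b x := by
  obtain ⟨hb0, hb1⟩ := hb
  have hbx : ∀ᶠ x in atTop, 1 / 4 < (b * x) * phi1 (b * x) :=
    (tendsto_id.const_mul_atTop hb0).eventually eventually_quarter_lt_mul_phi1
  have hphi1b := (tendsto_mul_phi1b hb0.le hb1.ne).eventually
    (Ioo_mem_nhds (by norm_num : (-1 / 8 : ℝ) < 0) (by norm_num : (0 : ℝ) < 1 / 8))
  have hev : ∀ᶠ x in atTop,
      0 < phi1 (b * x) - 1 / b * phi1b b x ∧ b * phi1b b x - phi1 x < 0 := by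
    filter_upwards [eventually_gt_atTop 0, eventually_quarter_lt_mul_phi1, hbx, hphi1b]
      with x hx hx₁ hbx₁ hx₂
    constructor
    · have : phi1 (b * x) - 1 / b * phi1b b x
          = ((b * x) * phi1 (b * x) - x * phi1b b x) / (b * x) := by
        field_simp
      rw [this]
      exact div_pos (by linarith) (by positivity)
    · have : b * phi1b b x - phi1 x = (b * (x * phi1b b x) - x * phi1 x) / x := by
        field_simp
      rw [this]
      exact div_neg_of_neg_of_pos (by nlinarith) hx
  obtain ⟨xs, hxs, h⟩ := (atTop_basis_Ioi' 0).eventually_iff.1 hev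
  exact ⟨xs, hxs, fun x hx => ⟨(h hx).1, (h hx).2, by rw [Psi_eq_sub]; linarith [h hx]⟩⟩

end DCV16
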